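/- The plane curve defined over F₂ by x⁶ + x⁵y + xy⁵ + y⁶ + (x⁵ + x²y³ + y⁵)z + x³yz² + xy²z³ + (x + y)z⁵ + z⁶ = 0 has exactly 24 F₈-rational points that are smooth points of the curve. -/

import Mathlib

open MvPolynomial

noncomputable def curveDeg6F8 : MvPolynomial (Fin 3) (GaloisField 2 3) :=
  X 0 ^ 6 + X 0 ^ 5 * X 1 + X 0 * X 1 ^ 5 + X 1 ^ 6 +
    (X 0 ^ 5 + X 0 ^ 2 * X 1 ^ 3 + X 1 ^ 5) * X 2 +
    X 0 ^ 3 * X 1 * X 2 ^ 2 + X 0 * X 1 ^ 2 * X 2 ^ 3 +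
    (X 0 + X 1) * X 2 ^ 5 + X 2 ^ 6

/-! Since the curve's equation and its partial derivatives are homogeneous, the smoothness
condition is invariant under scaling by units, so the nonzero vectors of `F₈³` satisfying it are
exactly seven times as many as the smooth points. These vectors are counted (168 of them) by
exhaustive evaluation in the explicit model `F₂[t]/(t³ + t + 1)` of `F₈`, and the count transfers
to `GaloisField 2 3` along a ring isomorphism. -/

open scoped LinearAlgebra.Projectivization

namespace Projectivization

theorem card_nonzero_subtype_eq_mul {k V : Type*} [DivisionRing k] [AddCommGroup V]
    [Module k V] (p : V → Prop) (hp : ∀ (a : kˣ) (v : V), p (a • v) ↔ p v) :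
    Nat.card {v : V // v ≠ 0 ∧ p v} = Nat.card {P : ℙ k V // p P.rep} * Nat.card kˣ := by
  have hrep : ∀ v : {v : V // v ≠ 0}, p v ↔ p (mk k v.1 v.2).rep := fun v => by
    obtain ⟨a, ha⟩ := exists_smul_eq_mk_rep k v.1 v.2
    rw [← ha, hp]
  rw [← Nat.card_prod, Nat.card_congr <|
    (Equiv.subtypeSubtypeEquivSubtypeInter (· ≠ 0) p).symm.trans <|
      ((nonZeroEquivProjectivizationProdUnits k V).subtypeEquiv
        (q := fun x => p x.1.rep) hrep).trans
        (Equiv.prodSubtypeFstEquivSubtypeProd (p := fun P : ℙ k V => p P.rep))]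

end Projectivization

structure F8 where
  c0 : ZMod 2
  c1 : ZMod 2
  c2 : ZMod 2
deriving DecidableEq, Fintype

namespace F8

instance : Zero F8 := ⟨⟨0, 0, 0⟩⟩
instance : One F8 := ⟨⟨1, 0, 0⟩⟩
instance : Add F8 := ⟨fun a b => ⟨a.c0 + b.c0, a.c1 + b.c1, a.c2 + b.c2⟩⟩
instance : Neg F8 := ⟨id⟩
/-- Multiplication of `c0 + c1 t + c2 t²` in `F₂[t]/(t³ + t + 1)`. -/
instance : Mul F8 := ⟨fun a b =>
  ⟨a.c0 * b.c0 + a.c1 * b.c2 + a.c2 * b.c1,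
   a.c0 * b.c1 + a.c1 * b.c0 + a.c1 * b.c2 + a.c2 * b.c1 + a.c2 * b.c2,
   a.c0 * b.c2 + a.c1 * b.c1 + a.c2 * b.c0 + a.c2 * b.c2⟩⟩
-- `a⁻¹ = a⁶`, as `F₈ˣ` has order 7.
instance : Inv F8 := ⟨fun a => let a2 := a * a; a2 * (a2 * a2)⟩

instance : CommRing F8 where
  nsmul := nsmulRec
  zsmul := zsmulRec
  add_assoc := by decide +kernel
  zero_add := by decide +kernel
  add_zero := by decide +kernel
  add_comm := by decide +kernel
  neg_add_cancel := by decide +kernel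
  mul_assoc := by decide +kernel
  one_mul := by decide +kernel
  mul_one := by decide +kernel
  left_distrib := by decide +kernel
  right_distrib := by decide +kernel
  mul_comm := by decide +kernel
  zero_mul := by decide +kernel
  mul_zero := by decide +kernel

instance : Field F8 where
  exists_pair_ne := ⟨0, 1, by decide +kernel⟩
  mul_inv_cancel := by decide +kernel
  inv_zero := by decide +kernel
  nnqsmul := _
  qsmul := _

theorem card_eq : Fintype.card F8 = 8 := by decide +kernel

end F8

section Forms

variable {K L : Type*} [CommRing K] [CommRing L]

def curveForm (v : Fin 3 → K) : K :=
  v 0 ^ 6 + v 0 ^ 5 * v 1 + v 0 * v 1 ^ 5 + v 1 ^ 6 +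
    (v 0 ^ 5 + v 0 ^ 2 * v 1 ^ 3 + v 1 ^ 5) * v 2 +
    v 0 ^ 3 * v 1 * v 2 ^ 2 + v 0 * v 1 ^ 2 * v 2 ^ 3 +
    (v 0 + v 1) * v 2 ^ 5 + v 2 ^ 6

/-- The partial derivatives of `curveForm`, with coefficients reduced mod 2. -/
def curveGrad : Fin 3 → (Fin 3 → K) → K
  | 0, v => v 0 ^ 4 * v 1 + v 1 ^ 5 + v 0 ^ 4 * v 2 + v 0 ^ 2 * v 1 * v 2 ^ 2 +
      v 1 ^ 2 * v 2 ^ 3 + v 2 ^ 5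
  | 1, v => v 0 ^ 5 + v 0 * v 1 ^ 4 + v 0 ^ 2 * v 1 ^ 2 * v 2 + v 1 ^ 4 * v 2 +
      v 0 ^ 3 * v 2 ^ 2 + v 2 ^ 5
  | 2, v => v 0 ^ 5 + v 0 ^ 2 * v 1 ^ 3 + v 1 ^ 5 + v 0 * v 1 ^ 2 * v 2 ^ 2 +
      (v 0 + v 1) * v 2 ^ 4

def IsSmoothZero (v : Fin 3 → K) : Prop :=
  curveForm v = 0 ∧ ∃ i, curveGrad i v ≠ 0

instance [DecidableEq K] : DecidablePred (IsSmoothZero (K := K)) :=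
  fun _ => inferInstanceAs (Decidable (_ ∧ _))

theorem curveForm_smul (a : K) (v : Fin 3 → K) : curveForm (a • v) = a ^ 6 * curveForm v := by
  simp only [curveForm, Pi.smul_apply, smul_eq_mul]
  ring

theorem curveGrad_smul (i : Fin 3) (a : K) (v : Fin 3 → K) :
    curveGrad i (a • v) = a ^ 5 * curveGrad i v := by
  fin_cases i <;> simp only [curveGrad, Pi.smul_apply, smul_eq_mul] <;> ring

theorem isSmoothZero_units_smul (a : Kˣ) (v : Fin 3 → K) :
    IsSmoothZero (a • v) ↔ IsSmoothZero v := by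
  simp only [IsSmoothZero, Units.smul_def, curveForm_smul, curveGrad_smul,
    ← Units.val_pow_eq_pow_val, ne_eq, Units.mul_right_eq_zero]

theorem curveForm_map (φ : K →+* L) (v : Fin 3 → K) : curveForm (φ ∘ v) = φ (curveForm v) := by
  simp only [curveForm, Function.comp_apply, map_add, map_mul, map_pow]

theorem curveGrad_map (φ : K →+* L) (i : Fin 3) (v : Fin 3 → K) :
    curveGrad i (φ ∘ v) = φ (curveGrad i v) := by
  fin_cases i <;> simp only [curveGrad, Function.comp_apply, map_add, map_mul, map_pow]

theorem isSmoothZero_map_iff {φ : K →+* L} (hφ : Function.Injective φ) (v : Fin 3 → K) :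
    IsSmoothZero (φ ∘ v) ↔ IsSmoothZero v := by
  simp only [IsSmoothZero, curveForm_map, curveGrad_map, ne_eq, map_eq_zero_iff φ hφ]

theorem card_nonzero_isSmoothZero_congr (e : K ≃+* L) :
    Nat.card {v : Fin 3 → K // v ≠ 0 ∧ IsSmoothZero v} =
      Nat.card {v : Fin 3 → L // v ≠ 0 ∧ IsSmoothZero v} := by
  let E : (Fin 3 → K) ≃+* (Fin 3 → L) := RingEquiv.piCongrRight fun _ => e
  refine Nat.card_congr <| E.toEquiv.subtypeEquiv fun v => ?_
  have hEv : E v = (e : K →+* L) ∘ v := rfl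
  rw [RingEquiv.toEquiv_eq_coe, EquivLike.coe_coe, map_ne_zero_iff E E.injective, hEv,
    isSmoothZero_map_iff e.injective]

end Forms

theorem card_nonzero_isSmoothZero_F8 :
    Fintype.card {v : Fin 3 → F8 // v ≠ 0 ∧ IsSmoothZero v} = 168 := by
  decide +kernel

theorem card_nonzero_isSmoothZero_of_card_eq_eight {K : Type*} [Field K] (hK : Nat.card K = 8) :
    Nat.card {v : Fin 3 → K // v ≠ 0 ∧ IsSmoothZero v} = 168 := by
  have : Finite K := Nat.finite_of_card_ne_zero (by omega)
  have : Fintype K := Fintype.ofFinite K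
  have hcard : Fintype.card F8 = Fintype.card K := by
    rw [F8.card_eq, ← Nat.card_eq_fintype_card, hK]
  rw [← card_nonzero_isSmoothZero_congr (FiniteField.ringEquivOfCardEq hcard),
    Nat.card_eq_fintype_card, card_nonzero_isSmoothZero_F8]

theorem eval_curveDeg6F8 (v : Fin 3 → GaloisField 2 3) : eval v curveDeg6F8 = curveForm v := by
  simp [curveDeg6F8, curveForm]

theorem eval_pderiv_curveDeg6F8 (i : Fin 3) (v : Fin 3 → GaloisField 2 3) :
    eval v (pderiv i curveDeg6F8) = curveGrad i v := by
  have h2 : (2 : GaloisField 2 3) = 0 := CharTwo.two_eq_zero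
  fin_cases i <;> simp [curveDeg6F8, curveGrad]
  · linear_combination (3 * v 0 ^ 5 + 2 * v 0 ^ 4 * v 1 + 2 * v 0 ^ 4 * v 2 +
      v 0 * v 1 ^ 3 * v 2 + v 0 ^ 2 * v 1 * v 2 ^ 2) * h2
  · linear_combination (2 * v 0 * v 1 ^ 4 + 3 * v 1 ^ 5 + v 0 ^ 2 * v 1 ^ 2 * v 2 +
      2 * v 1 ^ 4 * v 2 + v 0 * v 1 * v 2 ^ 3) * h2
  · linear_combination (v 0 ^ 3 * v 1 * v 2 + v 0 * v 1 ^ 2 * v 2 ^ 2 +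
      2 * (v 0 + v 1) * v 2 ^ 4 + 3 * v 2 ^ 5) * h2

theorem isSmoothZero_iff_eval (v : Fin 3 → GaloisField 2 3) :
    IsSmoothZero v ↔ eval v curveDeg6F8 = 0 ∧ ∃ i, eval v (pderiv i curveDeg6F8) ≠ 0 := by
  simp only [IsSmoothZero, eval_curveDeg6F8, eval_pderiv_curveDeg6F8]

/-- The curve has exactly `24` smooth `F₈`-rational points. -/
theorem stmt_8 :
    Nat.card {P : Projectivization (GaloisField 2 3) (Fin 3 → GaloisField 2 3) //
      eval P.rep curveDeg6F8 = 0 ∧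
      ∃ i, eval P.rep (pderiv i curveDeg6F8) ≠ 0} = 24 := by
  have hK : Nat.card (GaloisField 2 3) = 8 := GaloisField.card 2 3 (by norm_num)
  have hvec := card_nonzero_isSmoothZero_of_card_eq_eight hK
  rw [Projectivization.card_nonzero_subtype_eq_mul (k := GaloisField 2 3) _
    isSmoothZero_units_smul, Nat.card_units, hK] at hvec
  rw [Nat.card_congr <| Equiv.subtypeEquivRight
    fun P : ℙ (GaloisField 2 3) (Fin 3 → GaloisField 2 3) => (isSmoothZero_iff_eval P.rep).symm]
  omega
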